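/- arXiv:2102.03745 — 2 statements merged into one kernel-verified Lean document; each statement's English description precedes it below -/
import Mathlib

section
/- Let α be a finite type with at least two elements, let β be a linear order, and let W : α → α → β be symmetric (W i j = W j i for all i, j). Then there exist x ≠ y in α such that W x y ≤ W x k for every k ≠ x and W y x ≤ W y k for every k ≠ y. -/
/-! A globally lightest off-diagonal entry `W x y` is in particular lightest in row `x`, and by
symmetry also in row `y`: the two endpoints of a lightest edge choose each other. -/

theorem exists_ne_forall_ne_le {α β : Type*} [Finite α] [Nontrivial α] [LinearOrder β]
    (f : α → α → β) : ∃ x y : α, x ≠ y ∧ ∀ i j : α, i ≠ j → f x y ≤ f i j := by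
  obtain ⟨a, b, hab⟩ := exists_pair_ne α
  obtain ⟨⟨x, y⟩, hxy, hmin⟩ := Set.exists_min_image {p : α × α | p.1 ≠ p.2}
    (fun p => f p.1 p.2) (Set.toFinite _) ⟨(a, b), hab⟩
  exact ⟨x, y, hxy, fun i j hij => hmin (i, j) hij⟩

theorem pairing_algorithm_general {α : Type*} [Fintype α] [Nontrivial α]
    {β : Type*} [LinearOrder β] (W : α → α → β)
    (hsymm : ∀ i j : α, W i j = W j i) :
    ∃ x y : α, x ≠ y ∧
      (∀ k : α, k ≠ x → W x y ≤ W x k) ∧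
      (∀ k : α, k ≠ y → W y x ≤ W y k) := by
  obtain ⟨x, y, hxy, hmin⟩ := exists_ne_forall_ne_le W
  exact ⟨x, y, hxy, fun k hk => hmin x k hk.symm,
    fun k hk => hsymm y x ▸ hmin y k hk.symm⟩
end

section
/- Let n ≥ 2, let W : Fin n → Fin n → ℝ be symmetric (W i j = W j i for all i, j), and suppose c : Fin n → Fin n assigns to each row i its unique strict off-diagonal minimizer, i.e. for every i one has c i ≠ i and W i (c i) < W i k for every k with k ≠ i and k ≠ c i. Then there exists an index i such that c (c i) = i. -/
/-!
Take the row `i` whose minimal off-diagonal weight `W i (c i)` is smallest overall. If `c (c i) ≠ i`,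
then row `c i` has the entry `W (c i) i = W i (c i)`, which by strict minimality is larger than its own
minimum `W (c i) (c (c i))`, contradicting the choice of `i`.
-/

section StrictArgmin

variable {α β : Type*} [LinearOrder β] {W : α → α → β} {c : α → α}

theorem apply_apply_eq_of_le_apply_apply (hsymm : ∀ i j, W i j = W j i)
    (hc : ∀ i, c i ≠ i ∧ ∀ k, k ≠ i → k ≠ c i → W i (c i) < W i k) {i : α}
    (hi : W i (c i) ≤ W (c i) (c (c i))) : c (c i) = i := by
  by_contra h
  have hlt : W (c i) (c (c i)) < W (c i) i := (hc (c i)).2 i (hc i).1.symm (Ne.symm h)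
  rw [hsymm (c i) i] at hlt
  exact hlt.not_ge hi

theorem exists_apply_apply_eq_of_strict_argmin [Finite α] [Nonempty α]
    (hsymm : ∀ i j, W i j = W j i)
    (hc : ∀ i, c i ≠ i ∧ ∀ k, k ≠ i → k ≠ c i → W i (c i) < W i k) :
    ∃ i, c (c i) = i := by
  obtain ⟨i, hi⟩ := Finite.exists_min fun i => W i (c i)
  exact ⟨i, apply_apply_eq_of_le_apply_apply hsymm hc (hi (c i))⟩

end StrictArgmin

theorem argmin_map_has_two_cycle (n : ℕ) (hn : 2 ≤ n) (W : Fin n → Fin n → ℝ)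
    (hsymm : ∀ i j : Fin n, W i j = W j i) (c : Fin n → Fin n)
    (hc : ∀ i : Fin n, c i ≠ i ∧ ∀ k : Fin n, k ≠ i → k ≠ c i → W i (c i) < W i k) :
    ∃ i : Fin n, c (c i) = i :=
  have : Nonempty (Fin n) := ⟨⟨0, by omega⟩⟩
  exists_apply_apply_eq_of_strict_argmin hsymm hc
end
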